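/- arXiv:1108.3349 — 4 statements merged into one kernel-verified Lean document; each statement's English description precedes it below -/
import Mathlib

section
/- In a directed graph satisfying the descending chain condition (every directed path starting at any vertex has finite length) and the diamond condition (any two directed edges starting at the same vertex can be extended to directed paths ending at a common vertex), every connected component of the graph has a unique terminal vertex (a vertex with no outgoing edges). -/
/-!
By the descending chain condition every vertex reaches a terminal vertex. The diamond condition
is local confluence, so by Newman's lemma (well-founded induction along the edges) any two
vertices reachable from a common vertex reach a common vertex; hence "having a common
descendant" is an equivalence relation and contains the undirected connectivity relation.
Two terminal vertices with a common descendant coincide.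
-/

open Relation

namespace Relation

variable {α : Type*} {r : α → α → Prop}

theorem ReflTransGen.eq_of_forall_not_rel {a b : α} (ha : ∀ c, ¬ r a c)
    (h : ReflTransGen r a b) : a = b :=
  h.cases_head.resolve_right fun ⟨c, hac, _⟩ => ha c hac

theorem Join.eq_of_forall_not_rel {a b : α} (ha : ∀ c, ¬ r a c) (hb : ∀ c, ¬ r b c)
    (h : Join (ReflTransGen r) a b) : a = b :=
  let ⟨_, hac, hbc⟩ := h
  (hac.eq_of_forall_not_rel ha).trans (hbc.eq_of_forall_not_rel hb).symm

theorem exists_reflTransGen_forall_not_rel (wf : WellFounded (flip r)) (a : α) :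
    ∃ t, ReflTransGen r a t ∧ ∀ u, ¬ r t u := by
  obtain ⟨t, hat, ht⟩ := wf.has_min {b | ReflTransGen r a b} ⟨a, .refl⟩
  exact ⟨t, hat, fun u htu => ht u (hat.tail htu) htu⟩

/-- Newman's lemma. -/
theorem church_rosser_of_wellFounded (wf : WellFounded (flip r))
    (h : ∀ a b c, r a b → r a c → Join (ReflTransGen r) b c) (a : α) :
    ∀ {b c}, ReflTransGen r a b → ReflTransGen r a c → Join (ReflTransGen r) b c := by
  induction a using wf.induction with
  | _ a ih =>
    intro b c hab hac
    rcases hab.cases_head with rfl | ⟨b₁, hab₁, hb₁b⟩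
    · exact ⟨c, hac, .refl⟩
    rcases hac.cases_head with rfl | ⟨c₁, hac₁, hc₁c⟩
    · exact ⟨b, .refl, .head hab₁ hb₁b⟩
    obtain ⟨d, hb₁d, hc₁d⟩ := h a b₁ c₁ hab₁ hac₁
    obtain ⟨e, hbe, hde⟩ := ih b₁ hab₁ hb₁b hb₁d
    obtain ⟨f, hef, hcf⟩ := ih c₁ hac₁ (hc₁d.trans hde) hc₁c
    exact ⟨f, hbe.trans hef, hcf⟩

theorem join_of_reflTransGen_symmGen
    (h : ∀ a b c, ReflTransGen r a b → ReflTransGen r a c → Join (ReflTransGen r) b c)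
    {a b : α} (hab : ReflTransGen (SymmGen r) a b) : Join (ReflTransGen r) a b :=
  reflTransGen_le_of_equivalence_of_le (equivalence_join h)
    (fun x y hxy => hxy.elim (fun h => ⟨y, .single h, .refl⟩) (fun h => ⟨x, .refl, .single h⟩))
    a b hab

end Relation

/-- **Diamond Lemma.** In a directed graph (vertex type `V`, edge relation `E`)
satisfying the descending chain condition (no infinite directed path, i.e. the
reversed edge relation is well-founded) and the diamond condition (any two
directed edges out of a vertex extend to directed paths with a common endpoint),
every connected component (connectivity taken in the underlying undirected
graph) contains a unique terminal vertex (one with no outgoing edges). -/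
theorem diamond_lemma {V : Type*} (E : V → V → Prop)
    (dcc : WellFounded (fun a b => E b a))
    (diamond : ∀ x y z : V, E x y → E x z →
      ∃ w : V, ReflTransGen E y w ∧ ReflTransGen E z w) :
    ∀ x : V, ∃! t : V,
      (∀ u : V, ¬ E t u) ∧ ReflTransGen (fun a b => E a b ∨ E b a) x t := by
  have confluent : ∀ a b c, ReflTransGen E a b → ReflTransGen E a c → Join (ReflTransGen E) b c :=
    fun a _ _ => church_rosser_of_wellFounded dcc diamond a
  intro x
  obtain ⟨t, hxt, ht⟩ := exists_reflTransGen_forall_not_rel dcc x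
  refine ⟨t, ⟨ht, ReflTransGen.mono (fun _ _ => Or.inl) _ _ hxt⟩, ?_⟩
  rintro s ⟨hs, hxs⟩
  obtain ⟨c, hxc, hsc⟩ := join_of_reflTransGen_symmGen confluent hxs
  rw [← hsc.eq_of_forall_not_rel hs] at hxc
  exact Join.eq_of_forall_not_rel hs ht (confluent x s t hxc hxt)
end

section
/- In a directed graph satisfying the descending chain condition and the diamond condition, if two vertices x and y are connected by an undirected path, then x and y have the same normal form z, and in particular there exist directed paths from x to z and from y to z. -/
open Relation

private theorem newman_confl {V : Type*} (E : V → V → Prop)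
    (dcc : WellFounded (fun a b => E b a))
    (diamond : ∀ x y z : V, E x y → E x z →
      ∃ w : V, ReflTransGen E y w ∧ ReflTransGen E z w) :
    ∀ x y z : V, ReflTransGen E x y → ReflTransGen E x z →
      ∃ w : V, ReflTransGen E y w ∧ ReflTransGen E z w := by
  intro x
  induction x using dcc.induction with
  | _ x ih =>
    intro y z hy hz
    rcases hy.cases_head with rfl | ⟨y₁, hxy₁, hy₁y⟩
    · exact ⟨z, hz, ReflTransGen.refl⟩
    rcases hz.cases_head with rfl | ⟨z₁, hxz₁, hz₁z⟩
    · exact ⟨y, ReflTransGen.refl, hy⟩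
    obtain ⟨u, hyu, hzu⟩ := diamond x y₁ z₁ hxy₁ hxz₁
    obtain ⟨v, hyv, huv⟩ := ih y₁ hxy₁ y u hy₁y hyu
    obtain ⟨w, hvw, hzw⟩ := ih z₁ hxz₁ v z (hzu.trans huv) hz₁z
    exact ⟨w, hyv.trans hvw, hzw⟩

private theorem exists_nf {V : Type*} (E : V → V → Prop)
    (dcc : WellFounded (fun a b => E b a)) :
    ∀ x : V, ∃ z : V, (∀ u : V, ¬ E z u) ∧ ReflTransGen E x z := by
  intro x
  induction x using dcc.induction with
  | _ x ih =>
    by_cases h : ∀ u, ¬ E x u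
    · exact ⟨x, h, ReflTransGen.refl⟩
    · push_neg at h
      obtain ⟨u, hu⟩ := h
      obtain ⟨z, hz, huz⟩ := ih u hu
      exact ⟨z, hz, ReflTransGen.head hu huz⟩

private theorem nf_eq_of_rtg {V : Type*} {E : V → V → Prop} {z w : V}
    (hz : ∀ u : V, ¬ E z u) (h : ReflTransGen E z w) : z = w := by
  rcases h.cases_head with rfl | ⟨c, hc, _⟩
  · rfl
  · exact absurd hc (hz c)

/-- In a directed graph with the descending chain condition and the diamond
condition, if two vertices `x` and `y` are connected by an undirected path,
then they have one and the same normal form `z`: a unique terminal vertex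
reachable from both `x` and `y` by directed paths. -/
theorem connected_same_normal_form {V : Type*} (E : V → V → Prop)
    (dcc : WellFounded (fun a b => E b a))
    (diamond : ∀ x y z : V, E x y → E x z →
      ∃ w : V, ReflTransGen E y w ∧ ReflTransGen E z w) :
    ∀ x y : V, ReflTransGen (fun a b => E a b ∨ E b a) x y →
      ∃! z : V, (∀ u : V, ¬ E z u) ∧ ReflTransGen E x z ∧ ReflTransGen E y z := by
  have confl := newman_confl E dcc diamond
  intro x y h
  have uniq : ∀ z z' : V, (∀ u, ¬ E z u) → (∀ u, ¬ E z' u) →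
      ReflTransGen E x z → ReflTransGen E x z' → z = z' := by
    intro z z' hz hz' hxz hxz'
    obtain ⟨w, h1, h2⟩ := confl x z z' hxz hxz'
    rw [nf_eq_of_rtg hz h1, nf_eq_of_rtg hz' h2]
  induction h with
  | refl =>
    obtain ⟨z, hz, hxz⟩ := exists_nf E dcc x
    exact ⟨z, ⟨hz, hxz, hxz⟩, fun z' ⟨hz', hxz', _⟩ => uniq z' z hz' hz hxz' hxz⟩
  | tail hab hbc ih =>
    obtain ⟨z, ⟨hz, hxz, hbz⟩, _⟩ := ih
    rcases hbc with hbc | hcb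
    · obtain ⟨w, hcw, hzw⟩ := confl _ _ z (ReflTransGen.single hbc) hbz
      have : z = w := nf_eq_of_rtg hz hzw
      subst this
      exact ⟨z, ⟨hz, hxz, hcw⟩, fun z' ⟨hz', hxz', _⟩ => uniq z' z hz' hz hxz' hxz⟩
    · exact ⟨z, ⟨hz, hxz, ReflTransGen.head hcb hbz⟩,
        fun z' ⟨hz', hxz', _⟩ => uniq z' z hz' hz hxz' hxz⟩
end

section
/- Enhanced Diamond Lemma: let a directed graph carry an equivalence relation on undirected paths between each pair of vertices, satisfying: (trivial cycles) for any path f, the path f⁻¹·f is equivalent to the trivial path at the start of f; and (invariance) two paths from x to y are equivalent if and only if their extensions by a common edge adjacent to x (or to y) are equivalent. Suppose the graph satisfies the descending chain condition and the enhanced diamond condition: any two directed edges originating at a vertex may be extended to equivalent directed paths ending at one and the same vertex. Then every connected component has a unique terminal vertex, and any two paths between any two vertices are equivalent. -/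
/-- Undirected walks in a directed graph: edges may be traversed forwards
(`consF`) or backwards (`consB`). -/
inductive Walk {V : Type*} (E : V → V → Prop) : V → V → Type _
  | nil (x : V) : Walk E x x
  | consF {x y z : V} (h : E x y) (w : Walk E y z) : Walk E x z
  | consB {x y z : V} (h : E y x) (w : Walk E y z) : Walk E x z

namespace Walk

variable {V : Type*} {E : V → V → Prop}

/-- Concatenation of walks. -/
def append : ∀ {x y z : V}, Walk E x y → Walk E y z → Walk E x z
  | _, _, _, nil _, q => q
  | _, _, _, consF h p, q => consF h (p.append q)
  | _, _, _, consB h p, q => consB h (p.append q)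

/-- The reverse of a walk. -/
def reverse : ∀ {x y : V}, Walk E x y → Walk E y x
  | _, _, nil x => nil x
  | _, _, consF h p => p.reverse.append (consB h (nil _))
  | _, _, consB h p => p.reverse.append (consF h (nil _))

/-- A walk is directed if all its edges are traversed forwards. -/
inductive IsDirected : ∀ {x y : V}, Walk E x y → Prop
  | nil (x : V) : IsDirected (nil x)
  | consF {x y z : V} (h : E x y) {w : Walk E y z} :
      IsDirected w → IsDirected (consF h w)

end Walk

/-- An equivalence relation on undirected paths between each pair of vertices,
satisfying the trivial-cycles axiom and the invariance axiom (equivalence is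
preserved and reflected by extending both paths with a common edge, at either
endpoint, in either orientation). -/
structure PathEquiv {V : Type*} (E : V → V → Prop) where
  eqv : ∀ {x y : V}, Walk E x y → Walk E x y → Prop
  refl : ∀ {x y : V} (p : Walk E x y), eqv p p
  symm : ∀ {x y : V} {p q : Walk E x y}, eqv p q → eqv q p
  trans : ∀ {x y : V} {p q r : Walk E x y}, eqv p q → eqv q r → eqv p r
  /-- Trivial cycles: `f⁻¹ · f` is equivalent to the trivial path at the
  starting vertex of `f`. -/
  trivial_cycle : ∀ {x y : V} (p : Walk E x y),
    eqv (p.append p.reverse) (Walk.nil x)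
  /-- Invariance under extension by a forward edge at the far endpoint. -/
  inv_right_F : ∀ {x y z : V} (p q : Walk E x y) (h : E y z),
    eqv p q ↔ eqv (p.append (Walk.consF h (Walk.nil z)))
      (q.append (Walk.consF h (Walk.nil z)))
  /-- Invariance under extension by a backward edge at the far endpoint. -/
  inv_right_B : ∀ {x y z : V} (p q : Walk E x y) (h : E z y),
    eqv p q ↔ eqv (p.append (Walk.consB h (Walk.nil z)))
      (q.append (Walk.consB h (Walk.nil z)))
  /-- Invariance under extension by a forward edge at the starting vertex. -/
  inv_left_F : ∀ {w x y : V} (p q : Walk E x y) (h : E w x),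
    eqv p q ↔ eqv (Walk.consF h p) (Walk.consF h q)
  /-- Invariance under extension by a backward edge at the starting vertex. -/
  inv_left_B : ∀ {w x y : V} (p q : Walk E x y) (h : E x w),
    eqv p q ↔ eqv (Walk.consB h p) (Walk.consB h q)


section Aux

namespace Walk

variable {V : Type*} {E : V → V → Prop}

@[simp] theorem append_nil : ∀ {x y : V} (p : Walk E x y), p.append (nil y) = p
  | _, _, nil _ => rfl
  | _, _, consF h p => by rw [append, append_nil p]
  | _, _, consB h p => by rw [append, append_nil p]

theorem append_assoc : ∀ {x y z w : V} (p : Walk E x y) (q : Walk E y z) (r : Walk E z w),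
    (p.append q).append r = p.append (q.append r)
  | _, _, _, _, nil _, _, _ => rfl
  | _, _, _, _, consF h p, q, r => by rw [append, append, append_assoc p, append]
  | _, _, _, _, consB h p, q, r => by rw [append, append, append_assoc p, append]

theorem reverse_append : ∀ {x y z : V} (p : Walk E x y) (q : Walk E y z),
    (p.append q).reverse = q.reverse.append p.reverse
  | _, _, _, nil _, q => (append_nil _).symm
  | _, _, _, consF h p, q => by
      rw [append, reverse, reverse, reverse_append p, append_assoc]
  | _, _, _, consB h p, q => by
      rw [append, reverse, reverse, reverse_append p, append_assoc]

theorem reverse_reverse : ∀ {x y : V} (p : Walk E x y), p.reverse.reverse = p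
  | _, _, nil _ => rfl
  | _, _, consF h p => by rw [reverse, reverse_append, reverse_reverse p]; rfl
  | _, _, consB h p => by rw [reverse, reverse_append, reverse_reverse p]; rfl

theorem IsDirected.append {x y z : V} {p : Walk E x y} {q : Walk E y z}
    (hp : p.IsDirected) (hq : q.IsDirected) : (p.append q).IsDirected := by
  induction hp with
  | nil => exact hq
  | consF h _ ih => exact IsDirected.consF h (ih hq)

end Walk

namespace PathEquiv

variable {V : Type*} {E : V → V → Prop} (S : PathEquiv E)

theorem eqv_append_right : ∀ {x y z : V} (r : Walk E y z) {p q : Walk E x y},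
    S.eqv p q → S.eqv (p.append r) (q.append r)
  | _, _, _, Walk.nil _, p, q, h => by simpa using h
  | _, _, _, Walk.consF e r, p, q, h => by
      have h' := (S.inv_right_F p q e).mp h
      have h2 := eqv_append_right r h'
      rw [Walk.append_assoc, Walk.append_assoc] at h2
      exact h2
  | _, _, _, Walk.consB e r, p, q, h => by
      have h' := (S.inv_right_B p q e).mp h
      have h2 := eqv_append_right r h'
      rw [Walk.append_assoc, Walk.append_assoc] at h2
      exact h2

theorem eqv_append_left : ∀ {x y z : V} (r : Walk E x y) {p q : Walk E y z},
    S.eqv p q → S.eqv (r.append p) (r.append q)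
  | _, _, _, Walk.nil _, _, _, h => h
  | _, _, _, Walk.consF e r, p, q, h =>
      (S.inv_left_F (r.append p) (r.append q) e).mp (eqv_append_left r h)
  | _, _, _, Walk.consB e r, p, q, h =>
      (S.inv_left_B (r.append p) (r.append q) e).mp (eqv_append_left r h)

theorem eqv_rev_self_append {x y : V} (p : Walk E x y) :
    S.eqv (p.reverse.append p) (Walk.nil y) := by
  have h := S.trivial_cycle p.reverse
  rwa [Walk.reverse_reverse] at h

theorem eqv_reverse {x y : V} {p q : Walk E x y} (h : S.eqv p q) :
    S.eqv p.reverse q.reverse := by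
  have s1 : S.eqv p.reverse (p.reverse.append (q.append q.reverse)) := by
    have h2 := S.eqv_append_left p.reverse (S.symm (S.trivial_cycle q))
    rwa [Walk.append_nil] at h2
  have hq : S.eqv (p.reverse.append q) (Walk.nil y) :=
    S.trans (S.eqv_append_left p.reverse (S.symm h)) (S.eqv_rev_self_append p)
  have s2 : S.eqv ((p.reverse.append q).append q.reverse) q.reverse :=
    S.eqv_append_right q.reverse hq
  have s1' : S.eqv p.reverse ((p.reverse.append q).append q.reverse) := by
    rw [Walk.append_assoc]; exact s1
  exact S.trans s1' s2

theorem eqv_cancelBF {a b c : V} (h : E a b) (r : Walk E b c) :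
    S.eqv (Walk.consB h (Walk.consF h r)) r := by
  have base : S.eqv (Walk.consB h (Walk.consF h (Walk.nil b))) (Walk.nil b) := by
    have t := S.trivial_cycle (Walk.consF h (Walk.nil b)).reverse
    rwa [Walk.reverse_reverse] at t
  exact S.eqv_append_right r base

end PathEquiv

section Main

variable {V : Type*} {E : V → V → Prop}

theorem ed_exists_nf (dcc : WellFounded (fun a b => E b a)) (x : V) :
    ∃ t, (∀ u, ¬ E t u) ∧ ∃ p : Walk E x t, p.IsDirected := by
  induction x using dcc.induction with
  | _ x ih =>
    by_cases hx : ∀ u, ¬ E x u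
    · exact ⟨x, hx, Walk.nil x, Walk.IsDirected.nil x⟩
    · push_neg at hx
      obtain ⟨y, hy⟩ := hx
      obtain ⟨t, ht, p, hp⟩ := ih y hy
      exact ⟨t, ht, Walk.consF hy p, Walk.IsDirected.consF hy hp⟩

variable (S : PathEquiv E)

theorem ed_nf_unique (dcc : WellFounded (fun a b => E b a))
    (ediamond : ∀ (x y z : V) (h₁ : E x y) (h₂ : E x z),
      ∃ (w : V) (p : Walk E y w) (q : Walk E z w),
        p.IsDirected ∧ q.IsDirected ∧
          S.eqv (Walk.consF h₁ p) (Walk.consF h₂ q)) :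
    ∀ (x : V) {t t' : V} (p : Walk E x t) (q : Walk E x t'),
      p.IsDirected → q.IsDirected → (∀ u, ¬ E t u) → (∀ u, ¬ E t' u) → t = t' := by
  intro x
  induction x using dcc.induction with
  | _ x ih =>
    intro t t' p q hp hq ht ht'
    cases hp with
    | nil =>
      cases hq with
      | nil => rfl
      | consF h₂ hq₁ => exact absurd h₂ (ht _)
    | @consF _ y _ h₁ p₁ hp₁ =>
      cases hq with
      | nil => exact absurd h₁ (ht' _)
      | @consF _ z _ h₂ q₁ hq₁ =>
        obtain ⟨w, r, s, hr, hs, _⟩ := ediamond x y z h₁ h₂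
        obtain ⟨u, hu, d, hd⟩ := ed_exists_nf dcc w
        have e1 : t = u := ih y h₁ p₁ (r.append d) hp₁ (hr.append hd) ht hu
        have e2 : t' = u := ih z h₂ q₁ (s.append d) hq₁ (hs.append hd) ht' hu
        rw [e1, e2]

theorem ed_coh (dcc : WellFounded (fun a b => E b a))
    (ediamond : ∀ (x y z : V) (h₁ : E x y) (h₂ : E x z),
      ∃ (w : V) (p : Walk E y w) (q : Walk E z w),
        p.IsDirected ∧ q.IsDirected ∧
          S.eqv (Walk.consF h₁ p) (Walk.consF h₂ q)) :
    ∀ (x : V) {t : V} (p q : Walk E x t),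
      p.IsDirected → q.IsDirected → (∀ u, ¬ E t u) → S.eqv p q := by
  intro x
  induction x using dcc.induction with
  | _ x ih =>
    intro t p q hp hq ht
    cases hp with
    | nil =>
      cases hq with
      | nil => exact S.refl _
      | consF h₂ hq₁ => exact absurd h₂ (ht _)
    | @consF _ y _ h₁ p₁ hp₁ =>
      cases hq with
      | nil => exact absurd h₁ (ht _)
      | @consF _ z _ h₂ q₁ hq₁ =>
        obtain ⟨w, r, s, hr, hs, heq⟩ := ediamond x y z h₁ h₂
        obtain ⟨u, hu, d, hd⟩ := ed_exists_nf dcc w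
        have e1 : u = t :=
          (ed_nf_unique S dcc ediamond y p₁ (r.append d) hp₁ (hr.append hd) ht hu).symm
        subst e1
        have c1 : S.eqv p₁ (r.append d) := ih y h₁ p₁ (r.append d) hp₁ (hr.append hd) ht
        have c2 : S.eqv q₁ (s.append d) := ih z h₂ q₁ (s.append d) hq₁ (hs.append hd) ht
        have mid : S.eqv ((Walk.consF h₁ r).append d) ((Walk.consF h₂ s).append d) :=
          S.eqv_append_right d heq
        exact S.trans ((S.inv_left_F _ _ h₁).mp c1)
          (S.trans mid (S.symm ((S.inv_left_F _ _ h₂).mp c2)))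

theorem ed_conn (dcc : WellFounded (fun a b => E b a))
    (ediamond : ∀ (x y z : V) (h₁ : E x y) (h₂ : E x z),
      ∃ (w : V) (p : Walk E y w) (q : Walk E z w),
        p.IsDirected ∧ q.IsDirected ∧
          S.eqv (Walk.consF h₁ p) (Walk.consF h₂ q)) :
    ∀ {x y : V} (w : Walk E x y) {t t' : V} (p : Walk E x t) (q : Walk E y t'),
      p.IsDirected → q.IsDirected → (∀ u, ¬ E t u) → (∀ u, ¬ E t' u) → t = t'
  | _, _, Walk.nil x, _, _, p, q, hp, hq, ht, ht' =>
      ed_nf_unique S dcc ediamond x p q hp hq ht ht'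
  | _, _, Walk.consF h w', t, t', p, q, hp, hq, ht, ht' => by
      obtain ⟨u, hu, d, hd⟩ := ed_exists_nf dcc _
      have e1 : t = u := by
        exact ed_nf_unique S dcc ediamond _ p (Walk.consF h d) hp
          (Walk.IsDirected.consF h hd) ht hu
      have e2 : u = t' := ed_conn dcc ediamond w' d q hd hq hu ht'
      rw [e1, e2]
  | _, _, Walk.consB h w', t, t', p, q, hp, hq, ht, ht' => by
      obtain ⟨u, hu, d, hd⟩ := ed_exists_nf dcc _
      have e1 : u = t := by
        exact ed_nf_unique S dcc ediamond _ d (Walk.consF h p)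
          hd (Walk.IsDirected.consF h hp) hu ht
      have e2 : u = t' := ed_conn dcc ediamond w' d q hd hq hu ht'
      rw [← e1, e2]

theorem ed_key (dcc : WellFounded (fun a b => E b a))
    (ediamond : ∀ (x y z : V) (h₁ : E x y) (h₂ : E x z),
      ∃ (w : V) (p : Walk E y w) (q : Walk E z w),
        p.IsDirected ∧ q.IsDirected ∧
          S.eqv (Walk.consF h₁ p) (Walk.consF h₂ q)) :
    ∀ {x y : V} (p : Walk E x y) {t : V} (dx : Walk E x t) (dy : Walk E y t),
      dx.IsDirected → dy.IsDirected → (∀ u, ¬ E t u) →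
      S.eqv p (dx.append dy.reverse)
  | _, _, Walk.nil x, t, dx, dy, hdx, hdy, ht => by
      have h1 : S.eqv dx dy := ed_coh S dcc ediamond x dx dy hdx hdy ht
      have h2 : S.eqv dy.reverse dx.reverse := S.eqv_reverse (S.symm h1)
      exact S.symm (S.trans (S.eqv_append_left dx h2) (S.trivial_cycle dx))
  | _, _, Walk.consF h p', t, dx, dy, hdx, hdy, ht => by
      obtain ⟨u, hu, d, hd⟩ := ed_exists_nf dcc _
      have e : u = t := ed_conn S dcc ediamond p' d dy hd hdy hu ht
      subst e
      have ihp : S.eqv p' (d.append dy.reverse) :=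
        ed_key dcc ediamond p' d dy hd hdy ht
      have hc : S.eqv dx (Walk.consF h d) :=
        ed_coh S dcc ediamond _ dx (Walk.consF h d) hdx (Walk.IsDirected.consF h hd) ht
      have step1 : S.eqv (Walk.consF h p') (Walk.consF h (d.append dy.reverse)) :=
        (S.inv_left_F _ _ h).mp ihp
      have step2 : S.eqv ((Walk.consF h d).append dy.reverse) (dx.append dy.reverse) :=
        S.eqv_append_right dy.reverse (S.symm hc)
      exact S.trans step1 step2
  | _, _, Walk.consB h p', t, dx, dy, hdx, hdy, ht => by
      obtain ⟨u, hu, d, hd⟩ := ed_exists_nf dcc _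
      have e : u = t := ed_conn S dcc ediamond p' d dy hd hdy hu ht
      subst e
      have ihp : S.eqv p' (d.append dy.reverse) :=
        ed_key dcc ediamond p' d dy hd hdy ht
      have hc : S.eqv d (Walk.consF h dx) :=
        ed_coh S dcc ediamond _ d (Walk.consF h dx) hd (Walk.IsDirected.consF h hdx) ht
      have step1 : S.eqv (Walk.consB h p') (Walk.consB h (d.append dy.reverse)) :=
        (S.inv_left_B _ _ h).mp ihp
      have step2 : S.eqv (Walk.consB h (d.append dy.reverse))
          (Walk.consB h ((Walk.consF h dx).append dy.reverse)) :=
        (S.inv_left_B _ _ h).mp (S.eqv_append_right dy.reverse hc)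
      have step3 : S.eqv (Walk.consB h (Walk.consF h (dx.append dy.reverse)))
          (dx.append dy.reverse) := S.eqv_cancelBF h _
      exact S.trans step1 (S.trans step2 step3)

end Main

end Aux

/-- **Enhanced Diamond Lemma.** Let a directed graph with the descending
chain condition carry a path-equivalence as above, and suppose the enhanced
diamond condition holds: any two directed edges originating at a vertex may be
extended to equivalent directed paths ending at one and the same vertex. Then
every connected component has a unique terminal vertex, and any two paths
between any two vertices are equivalent. -/
theorem enhanced_diamond_lemma {V : Type*} (E : V → V → Prop)
    (S : PathEquiv E)
    (dcc : WellFounded (fun a b => E b a))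
    (ediamond : ∀ (x y z : V) (h₁ : E x y) (h₂ : E x z),
      ∃ (w : V) (p : Walk E y w) (q : Walk E z w),
        p.IsDirected ∧ q.IsDirected ∧
          S.eqv (Walk.consF h₁ p) (Walk.consF h₂ q)) :
    (∀ x : V, ∃! t : V, (∀ u : V, ¬ E t u) ∧ Nonempty (Walk E x t)) ∧
      (∀ (x y : V) (p q : Walk E x y), S.eqv p q) := by
  constructor
  · intro x
    obtain ⟨t, ht, p, hp⟩ := ed_exists_nf dcc x
    refine ⟨t, ⟨ht, ⟨p⟩⟩, ?_⟩
    rintro t' ⟨ht', ⟨w⟩⟩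
    exact (ed_conn S dcc ediamond w p (Walk.nil t') hp (Walk.IsDirected.nil t') ht ht').symm
  · intro x y p q
    obtain ⟨t, ht, dx, hdx⟩ := ed_exists_nf dcc x
    obtain ⟨t', ht', dy, hdy⟩ := ed_exists_nf dcc y
    have e : t = t' := ed_conn S dcc ediamond p dx dy hdx hdy ht ht'
    subst e
    exact S.trans (ed_key S dcc ediamond p dx dy hdx hdy ht)
      (S.symm (ed_key S dcc ediamond q dx dy hdx hdy ht))
end

section
/- Pentagon coherence for a single associative-up-to-isomorphism composition with strict units: if a binary operation on objects of a category carries a natural associator α satisfying Mac Lane's pentagon axiom and strict unit identities (with α equal to the identity whenever one of its arguments is a unit), then any two iterated-associator isomorphisms between two bracketings of a fixed sequence of n factors are equal. -/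
open CategoryTheory

universe u v

/-- A simplified (one-direction, `n = 1`) model of a pseudo `n`-fold
category: a category `kMor = C` with a composition `op` acting functorially
on morphisms via `map`, together with a natural associator isomorphism `α`
satisfying Mac Lane's pentagon axiom. -/
structure CompStruct (C : Type u) [Category.{v} C] where
  op : C → C → C
  map : ∀ {a b c d : C}, (a ⟶ b) → (c ⟶ d) → (op a c ⟶ op b d)
  map_id : ∀ a b : C, map (𝟙 a) (𝟙 b) = 𝟙 (op a b)
  map_comp : ∀ {a b c d e f : C} (g₁ : a ⟶ b) (g₂ : b ⟶ c) (h₁ : d ⟶ e) (h₂ : e ⟶ f),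
    map (g₁ ≫ g₂) (h₁ ≫ h₂) = map g₁ h₁ ≫ map g₂ h₂
  assoc : ∀ a b c : C, op (op a b) c ≅ op a (op b c)
  assoc_natural : ∀ {a a' b b' c c' : C} (f : a ⟶ a') (g : b ⟶ b') (h : c ⟶ c'),
    map (map f g) h ≫ (assoc a' b' c').hom = (assoc a b c).hom ≫ map f (map g h)
  pentagon : ∀ a b c d : C,
    map (assoc a b c).hom (𝟙 d) ≫ (assoc a (op b c) d).hom ≫
        map (𝟙 a) (assoc b c d).hom =
      (assoc (op a b) c d).hom ≫ (assoc a b (op c d)).hom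

/-- Bracketings (parenthesizations) of a sequence of factors, encoded as
binary trees with objects of `C` at the leaves. -/
inductive BTree (C : Type u) : Type u
  | leaf : C → BTree C
  | node : BTree C → BTree C → BTree C

/-- The sequence of factors of a bracketing. -/
def BTree.leaves {C : Type u} : BTree C → List C
  | .leaf a => [a]
  | .node l r => l.leaves ++ r.leaves

/-- Evaluation of a bracketing: the corresponding composition. -/
def evalT {C : Type u} [Category.{v} C] (S : CompStruct C) : BTree C → C
  | .leaf a => a
  | .node l r => S.op (evalT S l) (evalT S r)

/-- Formal coherence morphisms between bracketings: composites of whiskered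
instances of the associator `α` and its inverse. -/
inductive Move {C : Type u} : BTree C → BTree C → Type u
  | id (t : BTree C) : Move t t
  | assoc (a b c : BTree C) : Move ((a.node b).node c) (a.node (b.node c))
  | assocInv (a b c : BTree C) : Move (a.node (b.node c)) ((a.node b).node c)
  | whiskerR {a b : BTree C} (c : BTree C) : Move a b → Move (a.node c) (b.node c)
  | whiskerL {a b : BTree C} (c : BTree C) : Move a b → Move (c.node a) (c.node b)
  | comp {a b c : BTree C} : Move a b → Move b c → Move a c

/-- Interpretation of a formal coherence morphism as an actual morphism,
built from the associators `α` by whiskering and composition. -/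
def interp {C : Type u} [Category.{v} C] (S : CompStruct C) :
    ∀ {a b : BTree C}, Move a b → (evalT S a ⟶ evalT S b)
  | _, _, .id _ => 𝟙 _
  | _, _, .assoc _ _ _ => (S.assoc _ _ _).hom
  | _, _, .assocInv _ _ _ => (S.assoc _ _ _).inv
  | _, _, .whiskerR _ m => S.map (interp S m) (𝟙 _)
  | _, _, .whiskerL _ m => S.map (𝟙 _) (interp S m)
  | _, _, .comp m₁ m₂ => interp S m₁ ≫ interp S m₂

/-- A composition with strict two-sided unit: the associator is required to be
the identity (an `eqToHom`) whenever one of its arguments is the unit. -/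
structure UnitalCompStruct (C : Type u) [Category.{v} C] extends CompStruct C where
  one : C
  one_op : ∀ a : C, op one a = a
  op_one : ∀ a : C, op a one = a
  assoc_unit_left : ∀ b c : C,
    (assoc one b c).hom = eqToHom (by
      show op (op one b) c = op one (op b c); rw [one_op b, one_op (op b c)])
  assoc_unit_mid : ∀ a c : C,
    (assoc a one c).hom = eqToHom (by
      show op (op a one) c = op a (op one c); rw [op_one a, one_op c])
  assoc_unit_right : ∀ a b : C,
    (assoc a b one).hom = eqToHom (by
      show op (op a b) one = op a (op b one); rw [op_one (op a b), op_one b])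

/-!
Every bracketing has a canonical move to its fully right-associated normal form, and the normal
form depends only on the sequence of factors. Each generating move commutes with these canonical
moves up to the identity on the common normal form: for `α` itself this is the pentagon followed by
naturality, and the whiskered cases reduce to the unwhiskered ones by naturality and functoriality.
Since the canonical moves are invertible, every move `a ⟶ b` equals the canonical move of `a`
followed by the inverse of that of `b`.
-/

namespace BTree

variable {C : Type u}

/-- `t.graft n` right-associates the factors of `t` onto `n`. -/
def graft : BTree C → BTree C → BTree C
  | leaf a, n => node (leaf a) n
  | node l r, n => l.graft (r.graft n)

def normalForm : BTree C → BTree C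
  | leaf a => leaf a
  | node l r => l.graft r.normalForm

end BTree

namespace Move

variable {C : Type u}

def toGraft : (t n : BTree C) → Move (t.node n) (t.graft n)
  | .leaf _, _ => id _
  | .node l r, n => (assoc l r n).comp ((whiskerL l (toGraft r n)).comp (toGraft l (r.graft n)))

def toNormalForm : (t : BTree C) → Move t t.normalForm
  | .leaf _ => id _
  | .node l r => (whiskerL l (toNormalForm r)).comp (toGraft l r.normalForm)

theorem graft_eq {a b : BTree C} (m : Move a b) (n : BTree C) : a.graft n = b.graft n := by
  induction m generalizing n with
  | id | assoc | assocInv => rfl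
  | whiskerR c _ ih => exact ih (c.graft n)
  | whiskerL c _ ih => exact congrArg c.graft (ih n)
  | comp _ _ ih₁ ih₂ => exact (ih₁ n).trans (ih₂ n)

theorem normalForm_eq {a b : BTree C} (m : Move a b) : a.normalForm = b.normalForm := by
  induction m with
  | id | assoc | assocInv => rfl
  | whiskerR c m _ => exact m.graft_eq c.normalForm
  | whiskerL c _ ih => exact congrArg c.graft ih
  | comp _ _ ih₁ ih₂ => exact ih₁.trans ih₂

end Move

namespace CompStruct

variable {C : Type u} [Category.{v} C] (S : CompStruct C)

theorem map_id_comp (x : C) {a b c : C} (f : a ⟶ b) (g : b ⟶ c) :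
    S.map (𝟙 x) (f ≫ g) = S.map (𝟙 x) f ≫ S.map (𝟙 x) g := by
  rw [← S.map_comp, Category.id_comp]

theorem map_comp_id (x : C) {a b c : C} (f : a ⟶ b) (g : b ⟶ c) :
    S.map (f ≫ g) (𝟙 x) = S.map f (𝟙 x) ≫ S.map g (𝟙 x) := by
  rw [← S.map_comp, Category.id_comp]

theorem map_exchange {a b c d : C} (f : a ⟶ b) (g : c ⟶ d) :
    S.map f (𝟙 c) ≫ S.map (𝟙 b) g = S.map (𝟙 a) g ≫ S.map f (𝟙 d) := by
  rw [← S.map_comp, ← S.map_comp, Category.id_comp, Category.id_comp, Category.comp_id,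
    Category.comp_id]

instance isIso_map {a b c d : C} (f : a ⟶ b) (g : c ⟶ d) [IsIso f] [IsIso g] :
    IsIso (S.map f g) :=
  ⟨S.map (inv f) (inv g), by simp [← S.map_comp, S.map_id], by simp [← S.map_comp, S.map_id]⟩

/- The following identities are stated for arbitrary morphisms: `interp` of a composite move has
its objects in the form `evalT S (node l r)`, which is only definitionally `S.op _ _`, so the
corresponding cases below are closed by unfolding into these lemmas rather than by rewriting. -/

theorem assoc_hom_map_id_comp (x y : C) {c c' W V : C} (f : c ⟶ c') (g : S.op y c' ⟶ W)
    (h : S.op x W ⟶ V) :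
    (S.assoc x y c).hom ≫ S.map (𝟙 x) (S.map (𝟙 y) f ≫ g) ≫ h =
      S.map (𝟙 (S.op x y)) f ≫ (S.assoc x y c').hom ≫ S.map (𝟙 x) g ≫ h := by
  rw [S.map_id_comp, Category.assoc, ← reassoc_of% S.assoc_natural, S.map_id]

theorem map_map_id_id_assoc_hom {x x' : C} (f : x ⟶ x') (y c : C) :
    S.map (S.map f (𝟙 y)) (𝟙 c) ≫ (S.assoc x' y c).hom =
      (S.assoc x y c).hom ≫ S.map f (𝟙 (S.op y c)) := by
  rw [S.assoc_natural, S.map_id]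

theorem pentagon_comp {x y z n Z W V : C} (gz : S.op z n ⟶ Z) (gy : S.op y Z ⟶ W)
    (gx : S.op x W ⟶ V) :
    S.map (S.assoc x y z).hom (𝟙 n) ≫ (S.assoc x (S.op y z) n).hom ≫
        S.map (𝟙 x) ((S.assoc y z n).hom ≫ S.map (𝟙 y) gz ≫ gy) ≫ gx =
      (S.assoc (S.op x y) z n).hom ≫ S.map (𝟙 (S.op x y)) gz ≫ (S.assoc x y Z).hom ≫
        S.map (𝟙 x) gy ≫ gx := by
  rw [S.map_id_comp, Category.assoc, reassoc_of% S.pentagon, S.assoc_hom_map_id_comp]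

theorem map_inv_id_comp_eq {X Y n P : C} (α : X ≅ Y) {g : S.op X n ⟶ P} {g' : S.op Y n ⟶ P}
    (h : S.map α.hom (𝟙 n) ≫ g' = g) : S.map α.inv (𝟙 n) ≫ g = g' := by
  rw [← h, ← reassoc_of% S.map_comp_id, α.inv_hom_id, S.map_id, Category.id_comp]

theorem map_comp_id_comp_of_comp {A B D n P Q R : C} {f₁ : A ⟶ B} {f₂ : B ⟶ D}
    {ga : S.op A n ⟶ P} {gb : S.op B n ⟶ Q} {gd : S.op D n ⟶ R} {e₁ : P ⟶ Q} {e₂ : Q ⟶ R}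
    (h₁ : S.map f₁ (𝟙 n) ≫ gb = ga ≫ e₁) (h₂ : S.map f₂ (𝟙 n) ≫ gd = gb ≫ e₂) :
    S.map (f₁ ≫ f₂) (𝟙 n) ≫ gd = ga ≫ e₁ ≫ e₂ := by
  rw [S.map_comp_id, Category.assoc, h₂, reassoc_of% h₁]

theorem map_exchange_comp_of_comp {A B c N P Q : C} {f : A ⟶ B} (gc : c ⟶ N)
    {ga : S.op A N ⟶ P} {gb : S.op B N ⟶ Q} {e : P ⟶ Q}
    (h : S.map f (𝟙 N) ≫ gb = ga ≫ e) :
    S.map f (𝟙 c) ≫ S.map (𝟙 B) gc ≫ gb = (S.map (𝟙 A) gc ≫ ga) ≫ e := by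
  rw [reassoc_of% S.map_exchange, h, Category.assoc]

theorem map_map_id_id_comp_of_comp {A B c n N P Q : C} {f : A ⟶ B} (gc : S.op c n ⟶ N)
    {ga : S.op A N ⟶ P} {gb : S.op B N ⟶ Q} {e : P ⟶ Q}
    (h : S.map f (𝟙 N) ≫ gb = ga ≫ e) :
    S.map (S.map f (𝟙 c)) (𝟙 n) ≫ (S.assoc B c n).hom ≫ S.map (𝟙 B) gc ≫ gb =
      ((S.assoc A c n).hom ≫ S.map (𝟙 A) gc ≫ ga) ≫ e := by
  rw [reassoc_of% S.map_map_id_id_assoc_hom, S.map_exchange_comp_of_comp gc h]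
  simp only [Category.assoc]

theorem map_id_comp_of_comp {A B c P Q R R' : C} {f : A ⟶ B} {ga : A ⟶ P} {gb : B ⟶ Q}
    {e : P ⟶ Q} {k : S.op c Q ⟶ R} {k' : S.op c P ⟶ R'} {e' : R' ⟶ R}
    (h : f ≫ gb = ga ≫ e) (h' : S.map (𝟙 c) e ≫ k = k' ≫ e') :
    S.map (𝟙 c) f ≫ S.map (𝟙 c) gb ≫ k = (S.map (𝟙 c) ga ≫ k') ≫ e' := by
  rw [← reassoc_of% S.map_id_comp, h, S.map_id_comp, Category.assoc, h', Category.assoc]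

theorem map_map_id_comp_of_comp {A B c n P Q R R' : C} {f : A ⟶ B}
    {ga : S.op A n ⟶ P} {gb : S.op B n ⟶ Q} {e : P ⟶ Q} {k : S.op c Q ⟶ R}
    {k' : S.op c P ⟶ R'} {e' : R' ⟶ R}
    (h : S.map f (𝟙 n) ≫ gb = ga ≫ e) (h' : S.map (𝟙 c) e ≫ k = k' ≫ e') :
    S.map (S.map (𝟙 c) f) (𝟙 n) ≫ (S.assoc c B n).hom ≫ S.map (𝟙 c) gb ≫ k =
      ((S.assoc c A n).hom ≫ S.map (𝟙 c) ga ≫ k') ≫ e' := by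
  rw [reassoc_of% S.assoc_natural, S.map_id_comp_of_comp h h']
  simp only [Category.assoc]

end CompStruct

section Coherence

variable {C : Type u} [Category.{v} C] (S : CompStruct C)

instance isIso_interp {a b : BTree C} (m : Move a b) : IsIso (interp S m) := by
  induction m with
  | id => exact IsIso.id _
  | assoc => exact Iso.isIso_hom _
  | assocInv => exact Iso.isIso_inv _
  | whiskerR => exact S.isIso_map _ _
  | whiskerL => exact S.isIso_map _ _
  | comp _ _ ih₁ ih₂ => exact IsIso.comp_isIso' ih₁ ih₂

theorem interp_toGraft_of_eq (c : BTree C) {n n' : BTree C} (e : n = n') :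
    S.map (𝟙 (evalT S c)) (eqToHom (congrArg (evalT S) e)) ≫ interp S (Move.toGraft c n') =
      interp S (Move.toGraft c n) ≫ eqToHom (congrArg (fun t => evalT S (c.graft t)) e) := by
  subst e
  rw [eqToHom_refl, eqToHom_refl, S.map_id, Category.comp_id]
  exact Category.id_comp _

theorem interp_toGraft_assoc (x y z n : BTree C) :
    S.map (S.assoc (evalT S x) (evalT S y) (evalT S z)).hom (𝟙 (evalT S n)) ≫
        interp S (Move.toGraft (x.node (y.node z)) n) =
      interp S (Move.toGraft ((x.node y).node z) n) :=
  S.pentagon_comp _ _ _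

theorem interp_toGraft_naturality {a b : BTree C} (m : Move a b) (n : BTree C) :
    S.map (interp S m) (𝟙 (evalT S n)) ≫ interp S (Move.toGraft b n) =
      interp S (Move.toGraft a n) ≫ eqToHom (congrArg (evalT S) (m.graft_eq n)) := by
  induction m generalizing n with
  | id t =>
    exact ((congrArg (· ≫ _) (S.map_id _ _)).trans (Category.id_comp _)).trans
      (Category.comp_id _).symm
  | assoc x y z => exact (interp_toGraft_assoc S x y z n).trans (Category.comp_id _).symm
  | assocInv x y z =>
    exact (S.map_inv_id_comp_eq _ (interp_toGraft_assoc S x y z n)).trans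
      (Category.comp_id _).symm
  | whiskerR c _ ih =>
    exact S.map_map_id_id_comp_of_comp (interp S (Move.toGraft c n)) (ih (c.graft n))
  | whiskerL c m ih =>
    exact S.map_map_id_comp_of_comp (ih n) (interp_toGraft_of_eq S c (m.graft_eq n))
  | comp m₁ m₂ ih₁ ih₂ =>
    exact (S.map_comp_id_comp_of_comp (ih₁ n) (ih₂ n)).trans
      (congrArg (_ ≫ ·) (eqToHom_trans _ _))

theorem interp_toNormalForm_assoc (x y z : BTree C) :
    (S.assoc (evalT S x) (evalT S y) (evalT S z)).hom ≫
        interp S (Move.toNormalForm (x.node (y.node z))) =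
      interp S (Move.toNormalForm ((x.node y).node z)) :=
  S.assoc_hom_map_id_comp _ _ _ _ _

theorem interp_toNormalForm_naturality {a b : BTree C} (m : Move a b) :
    interp S m ≫ interp S (Move.toNormalForm b) =
      interp S (Move.toNormalForm a) ≫ eqToHom (congrArg (evalT S) m.normalForm_eq) := by
  induction m with
  | id t => exact (Category.id_comp _).trans (Category.comp_id _).symm
  | assoc x y z => exact (interp_toNormalForm_assoc S x y z).trans (Category.comp_id _).symm
  | assocInv x y z =>
    exact ((Iso.inv_comp_eq _).mpr (interp_toNormalForm_assoc S x y z).symm).trans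
      (Category.comp_id _).symm
  | whiskerR c m _ =>
    exact S.map_exchange_comp_of_comp (interp S (Move.toNormalForm c))
      (interp_toGraft_naturality S m c.normalForm)
  | whiskerL c m ih =>
    exact S.map_id_comp_of_comp ih (interp_toGraft_of_eq S c m.normalForm_eq)
  | comp m₁ m₂ ih₁ ih₂ =>
    rw [interp, Category.assoc, ih₂, reassoc_of% ih₁, eqToHom_trans]

theorem interp_eq {a b : BTree C} (m₁ m₂ : Move a b) : interp S m₁ = interp S m₂ := by
  rw [← cancel_mono (interp S (Move.toNormalForm b)), interp_toNormalForm_naturality,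
    interp_toNormalForm_naturality]

end Coherence

/-- **Pentagon coherence with strict units** (regular coherence in a single
direction): if a binary composition on a category carries a natural associator
`α` satisfying Mac Lane's pentagon axiom and strict unit identities (with `α`
the identity whenever one of its arguments is a unit), then any two
iterated-associator isomorphisms — formal composites of whiskered instances
of `α` and `α⁻¹` — between two bracketings of a fixed sequence of factors are
equal. -/
theorem pentagon_coherence {C : Type u} [Category.{v} C]
    (S : UnitalCompStruct C) (a b : BTree C) (m₁ m₂ : Move a b) :
    interp S.toCompStruct m₁ = interp S.toCompStruct m₂ :=
  interp_eq S.toCompStruct m₁ m₂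
end
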